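/- Let n ≥ 1 and let Σ'_{2n} be the subgroup of the symmetric group on {1, ..., 2n} generated by the transposition (1 2) and the permutations (2i-1 2i+1)(2i 2i+2) for i = 1, ..., n-1. Then Σ'_{2n} has order 2^n · n!. -/
import Mathlib

open Equiv

namespace SigmaPrimeAux

instance : CommGroup (Perm (Fin 2)) :=
  { (inferInstance : Group (Perm (Fin 2))) with mul_comm := by decide }

/-- The equivalence `Fin (2n) ≃ Fin n × Fin 2`. -/
def pairEquiv (n : ℕ) : Fin (2 * n) ≃ Fin n × Fin 2 where
  toFun k := (⟨k / 2, by have := k.isLt; omega⟩, ⟨k % 2, by omega⟩)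
  invFun p := ⟨2 * p.1 + p.2, by have := p.1.isLt; have := p.2.isLt; omega⟩
  left_inv k := by ext; simp; omega
  right_inv p := by
    ext
    · simp; omega
    · simp; omega

lemma pairEquiv_mk (n : ℕ) (i : Fin n) (j : Fin 2) (h : 2 * (i : ℕ) + (j : ℕ) < 2 * n) :
    pairEquiv n ⟨2 * (i : ℕ) + (j : ℕ), h⟩ = (i, j) := by
  have : ((⟨2 * (i : ℕ) + (j : ℕ), h⟩ : Fin (2 * n)) : ℕ) = ((pairEquiv n).symm (i, j) : ℕ) := by
    simp [pairEquiv]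
  rw [show (⟨2 * (i : ℕ) + (j : ℕ), h⟩ : Fin (2 * n)) = (pairEquiv n).symm (i, j) from Fin.ext this]
  simp

/-- Conjugation by an equivalence, as a `MulEquiv` of permutation groups. -/
def permMulEquiv {α β : Type*} (e : α ≃ β) : Perm α ≃* Perm β :=
  { e.permCongr with
    map_mul' := fun σ τ => by
      ext x
      simp [Equiv.permCongr_apply, Perm.mul_apply] }

lemma permMulEquiv_swap {α β : Type*} [DecidableEq α] [DecidableEq β] (e : α ≃ β) (a b : α) :
    permMulEquiv e (Equiv.swap a b) = Equiv.swap (e a) (e b) :=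
  Equiv.symm_trans_swap_trans a b e

variable {n : ℕ}

/-- The subgroup of permutations of `Fin n × Fin 2` preserving the fibers of `Prod.fst`. -/
def fiberwise (n : ℕ) : Subgroup (Perm (Fin n × Fin 2)) where
  carrier := {σ | ∀ x y : Fin n × Fin 2, x.1 = y.1 ↔ (σ x).1 = (σ y).1}
  one_mem' := by intro x y; simp
  mul_mem' := by
    intro a b ha hb x y
    exact (hb x y).trans (ha _ _)
  inv_mem' := by
    intro a ha x y
    simpa using (ha (a⁻¹ x) (a⁻¹ y)).symm

lemma prodShear_mem_fiberwise (τ : Perm (Fin n)) (f : Fin n → Perm (Fin 2)) :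
    Equiv.prodShear τ f ∈ fiberwise n := by
  intro x y
  simp only [Equiv.prodShear_apply]
  exact ⟨fun h => by rw [h], fun h => τ.injective h⟩

lemma exists_prodShear {σ : Perm (Fin n × Fin 2)} (hσ : σ ∈ fiberwise n) :
    ∃ (τ : Perm (Fin n)) (f : Fin n → Perm (Fin 2)), σ = Equiv.prodShear τ f := by
  have hτinj : Function.Injective (fun i : Fin n => (σ (i, 0)).1) := by
    intro i i' h
    have := (hσ (i, 0) (i', 0)).mpr h
    simpa using this
  have hfinj : ∀ i : Fin n, Function.Injective (fun j : Fin 2 => (σ (i, j)).2) := by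
    intro i j j' h
    have h1 : (σ (i, j)).1 = (σ (i, j')).1 := (hσ (i, j) (i, j')).mp rfl
    have : σ (i, j) = σ (i, j') := Prod.ext h1 h
    have := σ.injective this
    simpa using this
  refine ⟨Equiv.ofBijective _ (Finite.injective_iff_bijective.1 hτinj),
    fun i => Equiv.ofBijective _ (Finite.injective_iff_bijective.1 (hfinj i)), ?_⟩
  apply Equiv.ext
  rintro ⟨i, j⟩
  simp only [Equiv.prodShear_apply, Equiv.ofBijective_apply]
  have h1 : (σ (i, j)).1 = (σ (i, 0)).1 := (hσ (i, j) (i, 0)).mp rfl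
  rw [Prod.ext_iff]
  exact ⟨h1, rfl⟩

lemma prodShear_injective :
    Function.Injective (fun p : Perm (Fin n) × (Fin n → Perm (Fin 2)) =>
      Equiv.prodShear p.1 p.2) := by
  rintro ⟨τ, f⟩ ⟨τ', f'⟩ h
  have happ : ∀ i j, ((τ i : Fin n), f i j) = (τ' i, f' i j) := by
    intro i j
    have := congrArg (fun σ : Perm (Fin n × Fin 2) => σ (i, j)) h
    simpa using this
  have hτ : τ = τ' := by
    ext i
    exact congrArg Fin.val (congrArg Prod.fst (happ i 0))
  have hf : f = f' := by
    funext i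
    ext j
    exact congrArg Fin.val (congrArg Prod.snd (happ i j))
  simp [hτ, hf]

lemma card_fiberwise (n : ℕ) :
    Nat.card (fiberwise n) = 2 ^ n * n.factorial := by
  have hset : (fiberwise n : Set (Perm (Fin n × Fin 2))) =
      Set.range (fun p : Perm (Fin n) × (Fin n → Perm (Fin 2)) =>
        Equiv.prodShear p.1 p.2) := by
    ext σ
    constructor
    · intro hσ
      obtain ⟨τ, f, rfl⟩ := exists_prodShear hσ
      exact ⟨(τ, f), rfl⟩
    · rintro ⟨⟨τ, f⟩, rfl⟩
      exact prodShear_mem_fiberwise τ f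
  have : Nat.card (fiberwise n) = Nat.card (Perm (Fin n) × (Fin n → Perm (Fin 2))) := by
    rw [← Nat.card_range_of_injective prodShear_injective]
    exact Nat.card_congr (Equiv.setCongr hset)
  rw [this, Nat.card_prod, Nat.card_fun, Nat.card_eq_fintype_card, Nat.card_eq_fintype_card,
    Nat.card_eq_fintype_card, Fintype.card_perm, Fintype.card_perm, Fintype.card_fin,
    Fintype.card_fin]
  norm_num [mul_comm]

/-- Embedding `Perm (Fin n)` into `Perm (Fin n × Fin 2)` acting on the first factor. -/
def shearFst (n : ℕ) : Perm (Fin n) →* Perm (Fin n × Fin 2) where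
  toFun τ := Equiv.prodShear τ (fun _ => Equiv.refl _)
  map_one' := by ext x <;> rfl
  map_mul' σ τ := by ext x <;> rfl

/-- Embedding `Fin n → Perm (Fin 2)` into `Perm (Fin n × Fin 2)` acting on the fibers. -/
def shearSnd (n : ℕ) : (Fin n → Perm (Fin 2)) →* Perm (Fin n × Fin 2) where
  toFun f := Equiv.prodShear (Equiv.refl _) f
  map_one' := by ext x <;> rfl
  map_mul' f g := by ext x <;> rfl

lemma swap_swap_eq_shearFst (a b : Fin n) :
    Equiv.swap ((a : Fin n), (0 : Fin 2)) (b, 0) * Equiv.swap (a, 1) (b, 1) =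
      shearFst n (Equiv.swap a b) := by
  ext ⟨x, y⟩ <;>
    fin_cases y <;>
    simp [shearFst, Perm.mul_apply, Equiv.swap_apply_def, Prod.ext_iff] <;>
    split_ifs <;> simp_all

lemma shearSnd_mulSingle (a : Fin n) :
    shearSnd n (Pi.mulSingle a (Equiv.swap 0 1)) =
      Equiv.swap ((a : Fin n), (0 : Fin 2)) (a, 1) := by
  apply Equiv.ext
  rintro ⟨x, y⟩
  rcases eq_or_ne x a with rfl | hx
  · fin_cases y <;> simp [shearSnd, Pi.mulSingle, Equiv.swap_apply_def, Prod.ext_iff]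
  · fin_cases y <;> simp [shearSnd, Pi.mulSingle, Equiv.swap_apply_def, Prod.ext_iff, hx]

end SigmaPrimeAux



/-- The `i`-th block `{2i-1, 2i}` (1-based letters) of the pair partition of `{1, …, 2n}`,
encoded 0-based as `{2i, 2i+1} ⊆ Fin (2n)`. -/
def pairBlock (n : ℕ) (i : Fin n) : Set (Fin (2 * n)) :=
  {⟨2 * i, by have := i.isLt; omega⟩, ⟨2 * i + 1, by have := i.isLt; omega⟩}

/-- The generators of `Σ'_{2n}`: the transposition `(1 2)` and the block swaps
`(2i-1 2i+1)(2i 2i+2)` for `i = 1, …, n-1` (all encoded 0-based). -/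
def sigmaPrimeGens (n : ℕ) (hn : 1 ≤ n) : Set (Equiv.Perm (Fin (2 * n))) :=
  {Equiv.swap ⟨0, by omega⟩ ⟨1, by omega⟩} ∪
    {σ | ∃ i : Fin (n - 1),
      σ = Equiv.swap ⟨2 * i, by have := i.isLt; omega⟩ ⟨2 * i + 2, by have := i.isLt; omega⟩ *
          Equiv.swap ⟨2 * i + 1, by have := i.isLt; omega⟩ ⟨2 * i + 3, by have := i.isLt; omega⟩}

/-- The subgroup `Σ'_{2n}` of the symmetric group on `2n` letters. -/
def SigmaPrime (n : ℕ) (hn : 1 ≤ n) : Subgroup (Equiv.Perm (Fin (2 * n))) :=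
  Subgroup.closure (sigmaPrimeGens n hn)

open SigmaPrimeAux in
/-- `Σ'_{2n}` has order `2^n · n!`. -/
theorem sigmaPrime_card (n : ℕ) (hn : 1 ≤ n) :
    Nat.card (SigmaPrime n hn) = 2 ^ n * n.factorial := by
  classical
  obtain ⟨m, rfl⟩ : ∃ m, n = m + 1 := ⟨n - 1, by omega⟩
  set e := pairEquiv (m + 1) with he
  set Φ := (permMulEquiv e).toMonoidHom with hΦ
  have hΦinj : Function.Injective Φ := (permMulEquiv e).injective
  have hecomp : ∀ (k : ℕ) (hk : k < 2 * (m + 1)),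
      e ⟨k, hk⟩ = (⟨k / 2, by omega⟩, ⟨k % 2, by omega⟩) := fun k hk => rfl
  -- image of the first generator
  have h0 : Φ (Equiv.swap (⟨0, by omega⟩ : Fin (2 * (m+1))) ⟨1, by omega⟩) =
      Equiv.swap ((0 : Fin (m+1)), (0 : Fin 2)) (0, 1) := by
    rw [show Φ (Equiv.swap (⟨0, by omega⟩ : Fin (2 * (m+1))) ⟨1, by omega⟩) =
        Equiv.swap (e ⟨0, by omega⟩) (e ⟨1, by omega⟩) from permMulEquiv_swap e _ _]
    rw [hecomp 0, hecomp 1]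
    congr 1 <;> simp [Prod.ext_iff, Fin.ext_iff]
  -- image of the block-swap generators
  have h2 : ∀ i : Fin ((m + 1) - 1),
      Φ (Equiv.swap (⟨2 * i, by have := i.isLt; omega⟩ : Fin (2 * (m+1)))
            ⟨2 * i + 2, by have := i.isLt; omega⟩ *
          Equiv.swap ⟨2 * i + 1, by have := i.isLt; omega⟩
            ⟨2 * i + 3, by have := i.isLt; omega⟩) =
        shearFst (m + 1)
          (Equiv.swap (⟨(i : ℕ), by have := i.isLt; omega⟩ : Fin (m+1))
            ⟨(i : ℕ) + 1, by have := i.isLt; omega⟩) := by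
    intro i
    have hi := i.isLt
    rw [map_mul]
    rw [show Φ (Equiv.swap (⟨2 * i, by omega⟩ : Fin (2 * (m+1))) ⟨2 * i + 2, by omega⟩) =
        Equiv.swap (e ⟨2 * i, by omega⟩) (e ⟨2 * i + 2, by omega⟩) from permMulEquiv_swap e _ _]
    rw [show Φ (Equiv.swap (⟨2 * i + 1, by omega⟩ : Fin (2 * (m+1))) ⟨2 * i + 3, by omega⟩) =
        Equiv.swap (e ⟨2 * i + 1, by omega⟩) (e ⟨2 * i + 3, by omega⟩) from permMulEquiv_swap e _ _]
    rw [hecomp, hecomp, hecomp, hecomp,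
      ← swap_swap_eq_shearFst (⟨(i : ℕ), by omega⟩ : Fin (m+1)) ⟨(i : ℕ) + 1, by omega⟩]
    congr 1 <;> [skip; skip] <;> congr 1 <;>
      simp [Prod.ext_iff, Fin.ext_iff] <;> omega
  -- the mapped subgroup equals the fiberwise subgroup
  have hmap : (SigmaPrime (m + 1) hn).map Φ = fiberwise (m + 1) := by
    rw [SigmaPrime, MonoidHom.map_closure]
    apply le_antisymm
    · rw [Subgroup.closure_le]
      rintro σ ⟨g, hg, rfl⟩
      rcases hg with hg | ⟨i, rfl⟩
      · rw [Set.mem_singleton_iff] at hg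
        subst hg
        rw [h0, ← shearSnd_mulSingle (0 : Fin (m+1))]
        exact prodShear_mem_fiberwise (Equiv.refl _) _
      · rw [h2 i]
        exact prodShear_mem_fiberwise _ (fun _ => Equiv.refl _)
    · set G := Subgroup.closure (Φ '' sigmaPrimeGens (m+1) hn) with hG
      -- the first generator's image is in G
      have hg0 : Equiv.swap ((0 : Fin (m+1)), (0 : Fin 2)) (0, 1) ∈ G := by
        rw [← h0]
        exact Subgroup.subset_closure ⟨_, Or.inl rfl, rfl⟩
      -- block swaps are in G
      have hgen2 : ∀ i : Fin m,
          shearFst (m + 1) (Equiv.swap i.castSucc i.succ) ∈ G := by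
        intro i
        have hmem : shearFst (m + 1)
            (Equiv.swap (⟨(i : ℕ), by have := i.isLt; omega⟩ : Fin (m+1))
              ⟨(i : ℕ) + 1, by have := i.isLt; omega⟩) ∈ G := by
          rw [← h2 ⟨(i : ℕ), by have := i.isLt; omega⟩]
          exact Subgroup.subset_closure ⟨_, Or.inr ⟨⟨(i : ℕ), by have := i.isLt; omega⟩, rfl⟩, rfl⟩
        convert hmem using 3 <;> simp [Fin.ext_iff]
      -- all first-factor permutations are in G
      have hψ : ∀ τ : Equiv.Perm (Fin (m+1)), shearFst (m + 1) τ ∈ G := by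
        intro τ
        have hτ : τ ∈ Submonoid.closure
            (Set.range fun i : Fin m => Equiv.swap i.castSucc i.succ) := by
          rw [Equiv.Perm.mclosure_swap_castSucc_succ]; trivial
        induction hτ using Submonoid.closure_induction with
        | mem x hx => obtain ⟨i, rfl⟩ := hx; exact hgen2 i
        | one => rw [map_one]; exact one_mem _
        | mul x y _ _ hx hy => rw [map_mul]; exact mul_mem hx hy
      -- swaps within each block are in G
      have hswap : ∀ a : Fin (m+1), Equiv.swap (a, (0 : Fin 2)) (a, 1) ∈ G := by
        intro a
        have hconj : Equiv.swap (a, (0 : Fin 2)) (a, 1) =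
            shearFst (m+1) (Equiv.swap 0 a) *
              Equiv.swap ((0 : Fin (m+1)), (0 : Fin 2)) (0, 1) *
              (shearFst (m+1) (Equiv.swap 0 a))⁻¹ := by
          rw [← Equiv.swap_apply_apply]
          congr 1 <;> simp [shearFst, Equiv.prodShear_apply]
        rw [hconj]
        exact mul_mem (mul_mem (hψ _) hg0) (inv_mem (hψ _))
      -- all fiber permutations are in G
      have hχ : ∀ f : Fin (m+1) → Equiv.Perm (Fin 2), shearSnd (m + 1) f ∈ G := by
        have hsingle : ∀ (a : Fin (m+1)) (g : Equiv.Perm (Fin 2)),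
            shearSnd (m + 1) (Pi.mulSingle a g) ∈ G := by
          intro a g
          rcases (show ∀ g : Equiv.Perm (Fin 2), g = 1 ∨ g = Equiv.swap 0 1 by decide) g
            with h | h
          · simp only [h, Pi.mulSingle_one, map_one]
            exact one_mem _
          · rw [h, shearSnd_mulSingle]
            exact hswap a
        intro f
        have hf : f ∈ G.comap (shearSnd (m + 1)) := by
          rw [← Finset.univ_prod_mulSingle f]
          exact Subgroup.prod_mem _ (fun a _ => hsingle a (f a))
        exact hf
      intro σ hσ
      obtain ⟨τ, f, rfl⟩ := exists_prodShear hσ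
      have hdec : Equiv.prodShear τ f = shearFst (m+1) τ * shearSnd (m+1) f := by
        apply Equiv.ext; rintro ⟨i, j⟩; rfl
      rw [hdec]
      exact mul_mem (hψ τ) (hχ f)
  calc Nat.card (SigmaPrime (m + 1) hn)
      = Nat.card ((SigmaPrime (m + 1) hn).map Φ) :=
        Nat.card_congr (Subgroup.equivMapOfInjective _ _ hΦinj).toEquiv
    _ = 2 ^ (m + 1) * (m + 1).factorial := by rw [hmap, card_fiberwise]
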